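/- arXiv:2303.01028 — 4 statements merged into one kernel-verified Lean document; each statement's English description precedes it below -/
import Mathlib

section
/- For every continuous function f : [0, 2] → ℝ and every ε > 0, there exist an even positive integer d and real weights w_0, w_1, …, w_d such that sup_{λ ∈ [0,2]} | w_0 λ + Σ_{i=1}^{d/2} w_{2i} sin(i λ) + Σ_{i=1}^{d/2} w_{2i−1} cos(i λ) − f(λ) | < ε. That is, linear combinations of the identity together with the trigonometric functions λ ↦ sin(iλ) and λ ↦ cos(iλ) are uniformly dense in the continuous functions on [0, 2], so a learned linear readout of the sinusoidal eigenvalue encoding can approximate any univariate continuous spectral filter on the range [0, 2] of normalized-Laplacian eigenvalues. -/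
open Real Finset

lemma bern2 (x:ℝ) : (Polynomial.map (algebraMap ℚ ℝ) (Polynomial.bernoulli 2)).eval x = x^2 - x + 1/6 := by
  have h2 : (bernoulli 2 : ℚ) = 1/6 := by rw [bernoulli]; norm_num [bernoulli'_two]
  simp [Polynomial.bernoulli, Finset.sum_range_succ, bernoulli_one, h2]
  ring

lemma cos_quad {x : ℝ} (hx : x ∈ Set.Icc (0:ℝ) 1) :
    HasSum (fun n : ℕ => 1 / (n:ℝ) ^ 2 * Real.cos (2 * π * n * x)) (π^2 * (x^2 - x + 1/6)) := by
  have := hasSum_one_div_nat_pow_mul_cos (k := 1) one_ne_zero hx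
  rw [bern2] at this
  convert this using 2 with n
  · norm_num [Nat.factorial]; ring

lemma hasSum_one {lam : ℝ} (hl : lam ∈ Set.Icc (0:ℝ) 2) :
    HasSum (fun n : ℕ =>
      (2 * Real.cos (n*lam + 2*n) - 4 * Real.cos (n*lam + n) + 2 * Real.cos (n*lam)) / (n:ℝ)^2) 1 := by
  obtain ⟨h0, h2⟩ := hl
  have hpi : (4:ℝ) ≤ 2 * π := by nlinarith [Real.pi_gt_three]
  have hpi0 : (0:ℝ) < 2 * π := by nlinarith [Real.pi_gt_three]
  have key : ∀ a : ℝ, 0 ≤ a → a ≤ 2 →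
      HasSum (fun n : ℕ => 1 / (n:ℝ)^2 * Real.cos (n * lam + n * a))
        (π^2 * (((lam+a)/(2*π))^2 - (lam+a)/(2*π) + 1/6)) := by
    intro a ha ha2
    have hx : (lam + a) / (2*π) ∈ Set.Icc (0:ℝ) 1 := by
      constructor
      · positivity
      · rw [div_le_one hpi0]; linarith
    have harg : ∀ n:ℕ, 2 * π * n * ((lam + a) / (2*π)) = n * lam + n * a := by
      intro n; field_simp
    have := cos_quad hx
    simpa only [harg] using this
  have H0 := key 0 le_rfl (by norm_num)
  have H1 := key 1 zero_le_one one_le_two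
  have H2 := key 2 zero_le_two le_rfl
  have comb := ((H2.mul_left 2).sub (H1.mul_left 4)).add (H0.mul_left 2)
  convert comb using 1
  · rfl
  · funext n
    have c0 : Real.cos ((n:ℝ)*lam + (n:ℝ)*0) = Real.cos ((n:ℝ)*lam) := by norm_num
    have c1 : Real.cos ((n:ℝ)*lam + (n:ℝ)*1) = Real.cos ((n:ℝ)*lam + (n:ℝ)) := by norm_num
    have c2 : Real.cos ((n:ℝ)*lam + (n:ℝ)*2) = Real.cos ((n:ℝ)*lam + 2*(n:ℝ)) := by rw [mul_comm (n:ℝ) 2]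
    rw [c0, c1, c2]
    ring
  · have hpne : π ≠ 0 := Real.pi_ne_zero
    field_simp
    ring

noncomputable def cfun (n : ℕ) : ℝ → ℝ := fun θ => Real.cos (n * θ)

lemma cos_mul_mem {g : ℝ → ℝ} (hg : g ∈ Submodule.span ℝ (Set.range cfun)) :
    (fun θ => Real.cos θ * g θ) ∈ Submodule.span ℝ (Set.range cfun) := by
  induction hg using Submodule.span_induction with
  | mem x hx =>
    obtain ⟨n, rfl⟩ := hx
    match n with
    | 0 =>
      have : (fun θ => Real.cos θ * cfun 0 θ) = cfun 1 := by
        funext θ; simp [cfun]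
      rw [this]
      exact Submodule.subset_span ⟨1, rfl⟩
    | (m+1) =>
      have : (fun θ => Real.cos θ * cfun (m+1) θ)
          = (1/2 : ℝ) • cfun (m+2) + (1/2 : ℝ) • cfun m := by
        funext θ
        simp only [cfun, Pi.add_apply, Pi.smul_apply, smul_eq_mul]
        have e2 : ((m:ℝ)+2) * θ = ((m:ℝ)+1) * θ + θ := by ring
        have e0 : (m:ℝ) * θ = ((m:ℝ)+1) * θ - θ := by ring
        push_cast
        rw [e2, e0, Real.cos_add, Real.cos_sub]
        ring
      rw [this]
      exact Submodule.add_mem _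
        (Submodule.smul_mem _ _ (Submodule.subset_span (⟨m+2, rfl⟩ : cfun (m+2) ∈ Set.range cfun)))
        (Submodule.smul_mem _ _ (Submodule.subset_span (⟨m, rfl⟩ : cfun m ∈ Set.range cfun)))
  | zero =>
    have : (fun θ : ℝ => Real.cos θ * (0 : ℝ → ℝ) θ) = 0 := by funext θ; simp
    rw [this]; exact Submodule.zero_mem _
  | add x y hx hy ihx ihy =>
    have : (fun θ => Real.cos θ * (x + y) θ)
        = (fun θ => Real.cos θ * x θ) + (fun θ => Real.cos θ * y θ) := by
      funext θ; simp [Pi.add_apply]; ring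
    rw [this]; exact Submodule.add_mem _ ihx ihy
  | smul c x hx ihx =>
    have : (fun θ => Real.cos θ * (c • x) θ) = c • (fun θ => Real.cos θ * x θ) := by
      funext θ; simp [Pi.smul_apply, smul_eq_mul]; ring
    rw [this]; exact Submodule.smul_mem _ _ ihx

lemma cos_pow_mem (k : ℕ) : (fun θ => Real.cos θ ^ k) ∈ Submodule.span ℝ (Set.range cfun) := by
  induction k with
  | zero =>
    have : (fun θ : ℝ => Real.cos θ ^ 0) = cfun 0 := by funext θ; simp [cfun]
    rw [this]; exact Submodule.subset_span ⟨0, rfl⟩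
  | succ k ih =>
    have : (fun θ => Real.cos θ ^ (k+1)) = (fun θ => Real.cos θ * (fun t => Real.cos t ^ k) θ) := by
      funext θ; ring
    rw [this]; exact cos_mul_mem ih

lemma exists_cos_rep (p : Polynomial ℝ) :
    ∃ (N : ℕ) (A : ℕ → ℝ), ∀ θ : ℝ, p.eval (Real.cos θ) = ∑ n ∈ Finset.range N, A n * Real.cos (n * θ) := by
  have hmem : (fun θ => p.eval (Real.cos θ)) ∈ Submodule.span ℝ (Set.range cfun) := by
    have : (fun θ => p.eval (Real.cos θ))
        = ∑ i ∈ Finset.range (p.natDegree + 1), p.coeff i • (fun θ => Real.cos θ ^ i) := by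
      funext θ
      rw [Polynomial.eval_eq_sum_range]
      simp [Finset.sum_apply]
    rw [this]
    exact Submodule.sum_mem _ fun i _ => Submodule.smul_mem _ _ (cos_pow_mem i)
  rw [Finsupp.mem_span_range_iff_exists_finsupp] at hmem
  obtain ⟨c, hc⟩ := hmem
  refine ⟨c.support.sup id + 1, fun n => c n, fun θ => ?_⟩
  have h2 : (c.sum fun i a => a • cfun i) = ∑ n ∈ c.support, c n • cfun n := rfl
  rw [h2] at hc
  have h1 : (∑ n ∈ c.support, c n • cfun n) θ = p.eval (Real.cos θ) := by rw [hc]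
  rw [← h1, Finset.sum_apply]
  calc (∑ n ∈ c.support, (c n • cfun n) θ)
      = ∑ n ∈ c.support, c n * Real.cos (n*θ) := Finset.sum_congr rfl (fun n _ => rfl)
    _ = ∑ n ∈ Finset.range (c.support.sup id + 1), c n * Real.cos (n*θ) :=
        Finset.sum_subset
          (fun n hn => Finset.mem_range.2 (Nat.lt_succ_of_le (Finset.le_sup (f := id) hn)))
          (fun n _ hn => by simp [Finsupp.notMem_support_iff.1 hn])

set_option maxHeartbeats 2000000 in
/-- Linear combinations of the identity `λ` together with `sin(iλ)` and `cos(iλ)`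
(for `i = 1, …, d/2`) are uniformly dense in the continuous functions on `[0, 2]`:
for every continuous `f : [0,2] → ℝ` and `ε > 0` there are an even positive integer `d`
and weights `w_0, …, w_d` with
`sup_{λ ∈ [0,2]} |w_0 λ + Σ_{i=1}^{d/2} w_{2i} sin(iλ) + Σ_{i=1}^{d/2} w_{2i-1} cos(iλ) - f(λ)| < ε`. -/
theorem eigenvalue_encoding_universal
    (f : ℝ → ℝ) (hf : ContinuousOn f (Set.Icc 0 2)) (ε : ℝ) (hε : 0 < ε) :
    ∃ d : ℕ, Even d ∧ 0 < d ∧ ∃ w : ℕ → ℝ,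
      ∀ lam ∈ Set.Icc (0 : ℝ) 2,
        |w 0 * lam
            + (∑ i ∈ Finset.Icc 1 (d / 2), w (2 * i) * Real.sin (i * lam))
            + (∑ i ∈ Finset.Icc 1 (d / 2), w (2 * i - 1) * Real.cos (i * lam))
          - f lam| < ε := by
  have hpi2 : (2:ℝ) ≤ π := by linarith [Real.pi_gt_three]
  -- Step 1 : Weierstrass approximation of f ∘ arccos
  have hcont : ContinuousOn (fun t => f (Real.arccos t)) (Set.Icc (Real.cos 2) 1) := by
    apply hf.comp Real.continuous_arccos.continuousOn
    intro t ht
    refine ⟨Real.arccos_nonneg t, ?_⟩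
    have h1 : Real.arcsin (Real.cos 2) ≤ Real.arcsin t := Real.monotone_arcsin ht.1
    have h2 : Real.arcsin (Real.cos 2) = π/2 - 2 := by
      rw [← Real.sin_pi_div_two_sub]
      exact Real.arcsin_sin (by linarith) (by linarith)
    rw [Real.arccos]
    linarith
  obtain ⟨p, hp⟩ := exists_polynomial_near_of_continuousOn (Real.cos 2) 1 _ hcont (ε/2)
    (by positivity)
  obtain ⟨N, A, hA⟩ := exists_cos_rep p
  set A' : ℕ → ℝ := fun n => if n < N then A n else 0 with hA'def
  set K0 : ℝ := A' 0 with hK0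
  set ε2 : ℝ := ε / (2 * (|K0| + 1)) with hε2def
  have hε2 : 0 < ε2 := by positivity
  -- Step 2 : summability
  have hu : Summable (fun n : ℕ => 8 / (n:ℝ)^2) := by
    have h := (Real.summable_one_div_nat_pow (p := 2)).mpr one_lt_two
    have := h.mul_left (8:ℝ)
    convert this using 1
    · rfl
    funext n
    ring
  -- Step 3 : choose tail cutoff
  have htail : ∀ᶠ m in Filter.atTop, (∑' n : ℕ, 8 / (((n + m : ℕ)):ℝ)^2) < ε2 :=
    (tendsto_sum_nat_add (fun n : ℕ => 8 / (n:ℝ)^2)).eventually (gt_mem_nhds hε2)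
  obtain ⟨M, hM⟩ := htail.exists_forall_of_atTop
  set D : ℕ := max N M + 1 with hDdef
  have hDN : N ≤ D := by rw [hDdef]; exact (le_max_left N M).trans (Nat.le_succ _)
  have hDM : M ≤ D + 1 := by rw [hDdef]; omega
  have hD1 : 1 ≤ D := by rw [hDdef]; omega
  -- the coefficient sequences
  set cc : ℕ → ℝ := fun n => (2*Real.cos (2*(n:ℝ)) - 4*Real.cos (n:ℝ) + 2) / (n:ℝ)^2 with hcc
  set ss : ℕ → ℝ := fun n => (4*Real.sin (n:ℝ) - 2*Real.sin (2*(n:ℝ))) / (n:ℝ)^2 with hss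
  set w : ℕ → ℝ := fun k =>
    if k % 2 = 1 then A' ((k+1)/2) + K0 * cc ((k+1)/2)
    else if k = 0 then 0 else K0 * ss (k/2) with hwdef
  have hw0 : w 0 = 0 := by simp [hwdef]
  have hw2 : ∀ i : ℕ, 1 ≤ i → w (2*i) = K0 * ss i := by
    intro i hi
    simp only [hwdef]
    rw [if_neg (by omega), if_neg (by omega), show (2*i)/2 = i from by omega]
  have hw1 : ∀ i : ℕ, 1 ≤ i → w (2*i-1) = A' i + K0 * cc i := by
    intro i hi
    simp only [hwdef]
    rw [if_pos (by omega), show (2*i-1+1)/2 = i from by omega]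
  refine ⟨2*D, even_two_mul D, by omega, w, ?_⟩
  intro lam hlam
  have hd2 : (2*D)/2 = D := by omega
  rw [hd2]
  -- the cosine sums over range (D+1)
  have hIcc : Finset.range (D+1) = insert 0 (Finset.Icc 1 D) := by
    ext x; simp [Finset.mem_range, Finset.mem_Icc]; omega
  have h0notin : (0:ℕ) ∉ Finset.Icc 1 D := by simp
  -- (a) the polynomial part
  have hFa : (∑ n ∈ Finset.range (D+1), A' n * Real.cos (n*lam)) = p.eval (Real.cos lam) := by
    rw [hA lam]
    refine (Finset.sum_subset (Finset.range_subset_range.2 (by omega : N ≤ D + 1)) ?_).symm.trans ?_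
    · intro x _ hx
      have : ¬ x < N := by simpa [Finset.mem_range] using hx
      simp [hA'def, this]
    · refine Finset.sum_congr rfl fun n hn => ?_
      have : n < N := Finset.mem_range.1 hn
      simp [hA'def, this]
  -- (b) the constant-approximating part
  set g : ℕ → ℝ := fun n => (2 * Real.cos ((n:ℝ)*lam + 2*(n:ℝ)) - 4 * Real.cos ((n:ℝ)*lam + (n:ℝ))
      + 2 * Real.cos ((n:ℝ)*lam)) / (n:ℝ)^2 with hg
  have hs : HasSum g 1 := hasSum_one hlam
  have hs2 : HasSum (fun n : ℕ => g (n + (D+1))) (1 - ∑ n ∈ Finset.range (D+1), g n) :=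
    (hasSum_nat_add_iff (f := g) (D+1)).2 (by rwa [sub_add_cancel])
  have hbound : ∀ n : ℕ, |g n| ≤ 8 / (n:ℝ)^2 := by
    intro n
    rw [hg]
    rcases Nat.eq_zero_or_pos n with h|h
    · subst h; simp
    · have hn2 : (0:ℝ) < (n:ℝ)^2 := by positivity
      rw [abs_div, abs_of_pos hn2]
      refine (div_le_div_iff_of_pos_right hn2).2 ?_
      have c1 := Real.cos_le_one ((n:ℝ)*lam + 2*(n:ℝ))
      have c2 := Real.neg_one_le_cos ((n:ℝ)*lam + 2*(n:ℝ))
      have c3 := Real.cos_le_one ((n:ℝ)*lam + (n:ℝ))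
      have c4 := Real.neg_one_le_cos ((n:ℝ)*lam + (n:ℝ))
      have c5 := Real.cos_le_one ((n:ℝ)*lam)
      have c6 := Real.neg_one_le_cos ((n:ℝ)*lam)
      rw [abs_le]
      constructor <;> linarith
  have htb : |1 - ∑ n ∈ Finset.range (D+1), g n| ≤ ∑' n : ℕ, 8 / (((n + (D+1) : ℕ)):ℝ)^2 := by
    rw [← hs2.tsum_eq]
    have hu' : Summable (fun n : ℕ => 8 / (((n + (D+1) : ℕ)):ℝ)^2) :=
      (summable_nat_add_iff (f := fun n : ℕ => 8 / (n:ℝ)^2) (D+1)).2 hu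
    have hsum_abs : Summable (fun n : ℕ => |g (n + (D+1))|) :=
      Summable.of_nonneg_of_le (fun n => abs_nonneg _) (fun n => hbound (n + (D+1))) hu'
    calc |∑' n : ℕ, g (n + (D+1))| ≤ ∑' n : ℕ, |g (n + (D+1))| := by
          simpa [Real.norm_eq_abs] using
            norm_tsum_le_tsum_norm (f := fun n : ℕ => g (n + (D+1)))
              (by simpa [Real.norm_eq_abs] using hsum_abs)
      _ ≤ ∑' n : ℕ, 8 / (((n + (D+1) : ℕ)):ℝ)^2 :=
          Summable.tsum_le_tsum (fun n => hbound (n + (D+1))) hsum_abs hu'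
  have hGclose : |(∑ n ∈ Finset.range (D+1), g n) - 1| < ε2 := by
    rw [abs_sub_comm]
    exact htb.trans_lt (hM (D+1) (by omega))
  -- rewrite the three sums
  have hsin : ∑ i ∈ Finset.Icc 1 D, w (2*i) * Real.sin (i*lam)
      = K0 * ∑ i ∈ Finset.Icc 1 D, ss i * Real.sin (i*lam) := by
    rw [Finset.mul_sum]
    refine Finset.sum_congr rfl fun i hi => ?_
    rw [hw2 i (Finset.mem_Icc.1 hi).1]; ring
  have hcos : ∑ i ∈ Finset.Icc 1 D, w (2*i-1) * Real.cos (i*lam)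
      = (∑ i ∈ Finset.Icc 1 D, A' i * Real.cos (i*lam))
        + K0 * ∑ i ∈ Finset.Icc 1 D, cc i * Real.cos (i*lam) := by
    rw [Finset.mul_sum, ← Finset.sum_add_distrib]
    refine Finset.sum_congr rfl fun i hi => ?_
    rw [hw1 i (Finset.mem_Icc.1 hi).1]; ring
  have hA'sum : (∑ i ∈ Finset.Icc 1 D, A' i * Real.cos (i*lam))
      = p.eval (Real.cos lam) - K0 := by
    rw [hIcc, Finset.sum_insert h0notin] at hFa
    have h00 : A' 0 * Real.cos ((0:ℕ)*lam) = K0 := by norm_num [hK0]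
    linarith [hFa]
  have hgsum : (∑ n ∈ Finset.range (D+1), g n)
      = ∑ i ∈ Finset.Icc 1 D, (cc i * Real.cos (i*lam) + ss i * Real.sin (i*lam)) := by
    rw [hIcc, Finset.sum_insert h0notin]
    have hg0 : g 0 = 0 := by rw [hg]; norm_num
    rw [hg0, zero_add]
    refine Finset.sum_congr rfl fun n hn => ?_
    rw [hg]
    simp only [hcc, hss]
    rw [Real.cos_add, Real.cos_add]
    ring
  have hsplit : ∑ i ∈ Finset.Icc 1 D, (cc i * Real.cos (i*lam) + ss i * Real.sin (i*lam))
      = (∑ i ∈ Finset.Icc 1 D, cc i * Real.cos (i*lam))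
        + ∑ i ∈ Finset.Icc 1 D, ss i * Real.sin (i*lam) := Finset.sum_add_distrib
  have hexp : w 0 * lam + (∑ i ∈ Finset.Icc 1 D, w (2*i) * Real.sin (i*lam))
      + (∑ i ∈ Finset.Icc 1 D, w (2*i-1) * Real.cos (i*lam)) - f lam
      = (p.eval (Real.cos lam) - f lam) + K0 * ((∑ n ∈ Finset.range (D+1), g n) - 1) := by
    rw [hw0, hsin, hcos, hA'sum, hgsum, hsplit]; ring
  rw [hexp]
  have h1 : |p.eval (Real.cos lam) - f lam| < ε/2 := by
    have hmem : Real.cos lam ∈ Set.Icc (Real.cos 2) 1 :=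
      ⟨Real.cos_le_cos_of_nonneg_of_le_pi hlam.1 (by linarith) hlam.2, Real.cos_le_one lam⟩
    have := hp _ hmem
    rwa [Real.arccos_cos hlam.1 (by linarith [hlam.2])] at this
  have h2 : |K0 * ((∑ n ∈ Finset.range (D+1), g n) - 1)| ≤ ε/2 := by
    rw [abs_mul]
    calc |K0| * |(∑ n ∈ Finset.range (D+1), g n) - 1| ≤ |K0| * ε2 :=
          mul_le_mul_of_nonneg_left hGclose.le (abs_nonneg _)
      _ ≤ ε/2 := by
          rw [hε2def, ← mul_div_assoc, div_le_div_iff₀ (by positivity) two_pos]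
          nlinarith [abs_nonneg K0]
  calc |(p.eval (Real.cos lam) - f lam) + K0 * ((∑ n ∈ Finset.range (D+1), g n) - 1)|
      ≤ |p.eval (Real.cos lam) - f lam| + |K0 * ((∑ n ∈ Finset.range (D+1), g n) - 1)| :=
        abs_add_le _ _
    _ < ε := by linarith
end

section
/- Let f : ℝ → ℝ be continuous, 2π-periodic, and continuously differentiable. Then the partial sums of the Fourier series of f converge to f uniformly on ℝ: for every ε > 0 there exists N such that for all m ≥ N, sup_{x ∈ ℝ} | a_0/2 + Σ_{k=1}^{m} ( a_k cos(kx) + b_k sin(kx) ) − f(x) | < ε, where a_k = (1/π) ∫_{−π}^{π} f(x) cos(kx) dx and b_k = (1/π) ∫_{−π}^{π} f(x) sin(kx) dx. -/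
open Real intervalIntegral

open MeasureTheory Complex Function
set_option maxHeartbeats 1000000

local instance fact_two_pi_pos : Fact (0 < 2 * Real.pi) := ⟨by positivity⟩

/-- fourier as exponential on the circle of circumference 2π -/
lemma fourier_eq_exp' (n : ℤ) (x : ℝ) :
    fourier n (x : AddCircle (2 * Real.pi)) = Complex.exp ((n : ℂ) * x * Complex.I) := by
  rw [fourier_coe_apply]
  congr 1
  have hpi : ((Real.pi : ℂ)) ≠ 0 := by exact_mod_cast Real.pi_ne_zero
  push_cast
  field_simp

lemma exp_mul_I_eq (m : ℤ) (x g : ℝ) :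
    Complex.exp ((m : ℂ) * x * Complex.I) * (g : ℂ) =
      ((g * Real.cos (m * x) : ℝ) : ℂ) + ((g * Real.sin (m * x) : ℝ) : ℂ) * Complex.I := by
  have h : (m : ℂ) * x * Complex.I = (((m : ℝ) * x : ℝ) : ℂ) * Complex.I := by push_cast; ring
  rw [h, Complex.exp_mul_I, ← Complex.ofReal_cos, ← Complex.ofReal_sin]
  push_cast
  ring

lemma exp_integral (g : ℝ → ℝ) (hg : Continuous g) (m : ℤ) :
    (∫ x in (-Real.pi)..Real.pi, Complex.exp ((m : ℂ) * x * Complex.I) * (g x : ℂ)) =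
      ((∫ x in (-Real.pi)..Real.pi, g x * Real.cos (m * x) : ℝ) : ℂ)
      + ((∫ x in (-Real.pi)..Real.pi, g x * Real.sin (m * x) : ℝ) : ℂ) * Complex.I := by
  rw [intervalIntegral.integral_congr
      (g := fun x => ((g x * Real.cos (m * x) : ℝ) : ℂ) + ((g x * Real.sin (m * x) : ℝ) : ℂ) * Complex.I)
      (fun x _ => exp_mul_I_eq m x (g x))]
  rw [intervalIntegral.integral_add]
  · rw [intervalIntegral.integral_mul_const, intervalIntegral.integral_ofReal,
      intervalIntegral.integral_ofReal]
  · exact (Complex.continuous_ofReal.comp (by continuity)).intervalIntegrable _ _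
  · exact ((Complex.continuous_ofReal.comp (by continuity)).mul continuous_const).intervalIntegrable _ _

/-- pairing sum over symmetric interval of integers -/
lemma sum_Icc_int_eq (φ : ℤ → ℂ) (m : ℕ) :
    ∑ i ∈ Finset.Icc (-(m : ℤ)) m, φ i
      = φ 0 + ∑ k ∈ Finset.Icc 1 m, (φ k + φ (-(k : ℤ))) := by
  induction m with
  | zero => simp
  | succ m ih =>
    have h1 : Finset.Icc (-((m + 1 : ℕ) : ℤ)) ((m + 1 : ℕ) : ℤ)
        = insert ((m : ℤ) + 1) (insert (-((m : ℤ) + 1)) (Finset.Icc (-(m : ℤ)) m)) := by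
      ext i
      simp only [Finset.mem_Icc, Finset.mem_insert]
      push_cast
      omega
    have h2 : Finset.Icc 1 (m + 1) = insert (m + 1) (Finset.Icc 1 m) := by
      ext i
      simp only [Finset.mem_Icc, Finset.mem_insert]
      omega
    rw [h1, Finset.sum_insert (by simp only [Finset.mem_insert, Finset.mem_Icc]; push_cast; omega),
      Finset.sum_insert (by simp only [Finset.mem_Icc]; push_cast; omega), ih,
      h2, Finset.sum_insert (by simp only [Finset.mem_Icc]; omega)]
    push_cast
    ring


noncomputable def circLift (g : ℝ → ℝ) (hper : Function.Periodic g (2 * Real.pi)) :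
    AddCircle (2 * Real.pi) → ℂ :=
  Function.Periodic.lift (f := fun x : ℝ => (g x : ℂ)) (fun x => by simp [hper x])

lemma circLift_coe (g : ℝ → ℝ) (hper : Function.Periodic g (2 * Real.pi)) (x : ℝ) :
    circLift g hper ↑x = g x :=
  Function.Periodic.lift_coe _ _

lemma circLift_continuous (g : ℝ → ℝ) (hper : Function.Periodic g (2 * Real.pi))
    (hg : Continuous g) : Continuous (circLift g hper) :=
  Continuous.quotient_liftOn' (Complex.continuous_ofReal.comp hg) _

lemma circLift_fourierCoeff (g : ℝ → ℝ) (hper : Function.Periodic g (2 * Real.pi)) (n : ℤ) :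
    fourierCoeff (circLift g hper) n
      = (1 / (2 * Real.pi) : ℝ) •
        ∫ x in (-Real.pi)..Real.pi, Complex.exp (((-n : ℤ) : ℂ) * x * Complex.I) * (g x : ℂ) := by
  rw [fourierCoeff_eq_intervalIntegral _ n (-Real.pi)]
  rw [show -Real.pi + 2 * Real.pi = Real.pi by ring]
  congr 1
  refine intervalIntegral.integral_congr fun x _ => ?_
  rw [circLift_coe, fourier_eq_exp', smul_eq_mul]

lemma fourierCoeffOn_pi_eq (F : ℝ → ℂ) (n : ℤ)
    (hab : (-Real.pi : ℝ) < -Real.pi + 2 * Real.pi) :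
    fourierCoeffOn hab F n
      = (1 / (2 * Real.pi) : ℝ) •
        ∫ x in (-Real.pi)..Real.pi, Complex.exp (((-n : ℤ) : ℂ) * x * Complex.I) * F x := by
  rw [fourierCoeffOn_eq_integral]
  rw [show -Real.pi + 2 * Real.pi = Real.pi by ring]
  rw [show Real.pi - -Real.pi = 2 * Real.pi by ring]
  congr 1
  refine intervalIntegral.integral_congr fun x _ => ?_
  rw [fourier_eq_exp', smul_eq_mul]

/-- Uniform convergence of Fourier series: if `f : ℝ → ℝ` is continuous, `2π`-periodic,
and continuously differentiable, then its Fourier partial sums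
`a_0/2 + Σ_{k=1}^m (a_k cos(kx) + b_k sin(kx))`, with
`a_k = (1/π) ∫_{-π}^{π} f(x) cos(kx) dx` and `b_k = (1/π) ∫_{-π}^{π} f(x) sin(kx) dx`,
converge to `f` uniformly on `ℝ`. -/
theorem fourier_series_uniform_convergence
    (f : ℝ → ℝ) (hf_cont : Continuous f)
    (hf_per : Function.Periodic f (2 * Real.pi))
    (hf_diff : ContDiff ℝ 1 f)
    (a b : ℕ → ℝ)
    (ha : ∀ k : ℕ, a k = (1 / Real.pi) * ∫ x in (-Real.pi)..Real.pi, f x * Real.cos (k * x))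
    (hb : ∀ k : ℕ, b k = (1 / Real.pi) * ∫ x in (-Real.pi)..Real.pi, f x * Real.sin (k * x)) :
    ∀ ε > 0, ∃ N : ℕ, ∀ m ≥ N, ∀ x : ℝ,
      |a 0 / 2 + (∑ k ∈ Finset.Icc 1 m, (a k * Real.cos (k * x) + b k * Real.sin (k * x)))
        - f x| < ε := by
  intro ε hε
  have hπ : (0:ℝ) < Real.pi := Real.pi_pos
  have hdiff : Differentiable ℝ f := hf_diff.differentiable one_ne_zero
  have hf'_cont : Continuous (deriv f) := hf_diff.continuous_deriv le_rfl
  have hf'_per : Function.Periodic (deriv f) (2 * Real.pi) := by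
    intro x
    have hfe : (fun y => f (y + 2 * Real.pi)) = f := funext fun y => hf_per y
    calc deriv f (x + 2 * Real.pi) = deriv (fun y => f (y + 2 * Real.pi)) x :=
          (deriv_comp_add_const f _ x).symm
      _ = deriv f x := by rw [hfe]
  set G := circLift f hf_per with hG
  set G' := circLift (deriv f) hf'_per with hG'
  set Gm : C(AddCircle (2 * Real.pi), ℂ) := ⟨G, circLift_continuous _ _ hf_cont⟩ with hGm
  set G'm : C(AddCircle (2 * Real.pi), ℂ) := ⟨G', circLift_continuous _ _ hf'_cont⟩ with hG'm
  -- coefficients in terms of a, b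
  have hA : ∀ k : ℕ, (∫ x in (-Real.pi)..Real.pi, f x * Real.cos (k * x)) = Real.pi * a k := by
    intro k; rw [ha k]; field_simp
  have hB : ∀ k : ℕ, (∫ x in (-Real.pi)..Real.pi, f x * Real.sin (k * x)) = Real.pi * b k := by
    intro k; rw [hb k]; field_simp
  have hcpos : ∀ k : ℕ, fourierCoeff G (k : ℤ)
      = (1 / (2 * Real.pi) : ℝ) • (((Real.pi * a k : ℝ) : ℂ) - ((Real.pi * b k : ℝ) : ℂ) * Complex.I) := by
    intro k
    rw [hG, circLift_fourierCoeff, exp_integral f hf_cont]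
    have c1 : (∫ x in (-Real.pi)..Real.pi, f x * Real.cos (((-(k:ℤ) : ℤ) : ℝ) * x)) = Real.pi * a k := by
      rw [← hA k]
      refine intervalIntegral.integral_congr fun x _ => ?_
      rw [show ((-(k:ℤ) : ℤ) : ℝ) * x = -((k:ℝ) * x) by push_cast; ring, Real.cos_neg]
    have c2 : (∫ x in (-Real.pi)..Real.pi, f x * Real.sin (((-(k:ℤ) : ℤ) : ℝ) * x)) = -(Real.pi * b k) := by
      rw [← hB k, ← intervalIntegral.integral_neg]
      refine intervalIntegral.integral_congr fun x _ => ?_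
      rw [show ((-(k:ℤ) : ℤ) : ℝ) * x = -((k:ℝ) * x) by push_cast; ring, Real.sin_neg]
      ring
    rw [c1, c2]
    congr 1
    push_cast
    ring
  have hcneg : ∀ k : ℕ, fourierCoeff G (-(k : ℤ))
      = (1 / (2 * Real.pi) : ℝ) • (((Real.pi * a k : ℝ) : ℂ) + ((Real.pi * b k : ℝ) : ℂ) * Complex.I) := by
    intro k
    rw [hG, circLift_fourierCoeff, exp_integral f hf_cont, neg_neg]
    have c1 : (∫ x in (-Real.pi)..Real.pi, f x * Real.cos (((k:ℤ) : ℝ) * x)) = Real.pi * a k := by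
      rw [← hA k]
      refine intervalIntegral.integral_congr fun x _ => ?_
      norm_num
    have c2 : (∫ x in (-Real.pi)..Real.pi, f x * Real.sin (((k:ℤ) : ℝ) * x)) = Real.pi * b k := by
      rw [← hB k]
      refine intervalIntegral.integral_congr fun x _ => ?_
      norm_num
    rw [c1, c2]
  -- the pairing identity
  have hb0 : b 0 = 0 := by
    rw [hb]; simp
  have hπc : (Real.pi : ℂ) ≠ 0 := by exact_mod_cast Real.pi_ne_zero
  have hc0 : fourierCoeff G 0 = ((a 0 / 2 : ℝ) : ℂ) := by
    have h := hcpos 0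
    rw [Nat.cast_zero] at h
    rw [h, hb0, Complex.real_smul]
    push_cast
    field_simp
    ring
  have hpair : ∀ k : ℕ, ∀ x : ℝ,
      fourierCoeff G (k : ℤ) • fourier (k : ℤ) (↑x : AddCircle (2 * Real.pi))
        + fourierCoeff G (-(k : ℤ)) • fourier (-(k : ℤ)) (↑x : AddCircle (2 * Real.pi))
      = ((a k * Real.cos (k * x) + b k * Real.sin (k * x) : ℝ) : ℂ) := by
    intro k x
    rw [hcpos k, hcneg k, fourier_eq_exp', fourier_eq_exp', smul_eq_mul, smul_eq_mul]
    set cc := Real.cos ((k:ℝ) * x) with hcc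
    set ss := Real.sin ((k:ℝ) * x) with hss
    have e1 : Complex.exp (((k : ℤ) : ℂ) * x * Complex.I) = ((cc : ℝ) : ℂ) + ((ss : ℝ) : ℂ) * Complex.I := by
      have h := exp_mul_I_eq (k : ℤ) x 1
      rw [Complex.ofReal_one, mul_one, one_mul, one_mul] at h
      rw [h, hcc, hss]
      norm_num
    have e2 : Complex.exp (((-(k : ℤ) : ℤ) : ℂ) * x * Complex.I) = ((cc : ℝ) : ℂ) - ((ss : ℝ) : ℂ) * Complex.I := by
      have h := exp_mul_I_eq (-(k : ℤ)) x 1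
      rw [Complex.ofReal_one, mul_one, one_mul, one_mul] at h
      rw [h]
      rw [show ((-(k:ℤ) : ℤ) : ℝ) * x = -((k:ℝ) * x) by push_cast; ring, Real.cos_neg, Real.sin_neg,
        ← hcc, ← hss]
      push_cast
      ring
    rw [e1, e2, Complex.real_smul, Complex.real_smul]
    push_cast
    field_simp
    linear_combination (-2 * (b k : ℂ) * (ss : ℂ)) * Complex.I_sq
  -- summability
  have hd2 : Summable (fun n : ℤ => ‖fourierCoeff G' n‖ ^ 2) := by
    set X := ContinuousMap.toLp (E := ℂ) 2 AddCircle.haarAddCircle ℂ G'm with hX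
    have h1 : ∀ n : ℤ, fourierBasis.repr X n = fourierCoeff G' n := by
      intro n
      rw [fourierBasis_repr, hX, fourierCoeff_toLp]
      rfl
    have h2 := (lp.memℓp (fourierBasis.repr X)).summable (p := 2) (by norm_num)
    refine h2.congr fun n => ?_
    rw [h1 n]
    norm_num
  have hab : (-Real.pi : ℝ) < -Real.pi + 2 * Real.pi := by linarith
  have heq1 : ∀ n : ℤ, fourierCoeff G n = fourierCoeffOn hab (fun x : ℝ => (f x : ℂ)) n := by
    intro n; rw [hG, circLift_fourierCoeff, fourierCoeffOn_pi_eq]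
  have heq2 : ∀ n : ℤ, fourierCoeff G' n = fourierCoeffOn hab (fun x : ℝ => ((deriv f x : ℝ) : ℂ)) n := by
    intro n; rw [hG', circLift_fourierCoeff, fourierCoeffOn_pi_eq]
  have hnorm : ∀ n : ℤ, n ≠ 0 → ‖fourierCoeff G n‖ = ‖fourierCoeff G' n‖ / |(n : ℝ)| := by
    intro n hn
    have hD : ∀ y ∈ Set.uIcc (-Real.pi) (-Real.pi + 2 * Real.pi),
        HasDerivAt (fun z : ℝ => ((f z : ℝ) : ℂ)) (((deriv f y : ℝ) : ℂ)) y :=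
      fun y _ => ((hdiff y).hasDerivAt).ofReal_comp
    have hder := fourierCoeffOn_of_hasDerivAt hab hn hD
      ((Complex.continuous_ofReal.comp hf'_cont).intervalIntegrable _ _)
    rw [heq1 n, heq2 n, hder]
    simp only [show f (-Real.pi + 2 * Real.pi) = f (-Real.pi) from hf_per _, sub_self, mul_zero,
      zero_sub, norm_mul, norm_neg]
    have hn' : ((n : ℂ)) ≠ 0 := by exact_mod_cast hn
    have habs : (0:ℝ) < |(n : ℝ)| := by
      rw [abs_pos]; exact_mod_cast hn
    have e1 : ‖(1 : ℂ) / (-2 * (Real.pi : ℂ) * Complex.I * (n : ℂ))‖ = 1 / (2 * Real.pi * |(n:ℝ)|) := by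
      rw [norm_div, norm_one]
      simp [abs_of_pos hπ, Complex.norm_intCast]
    have e2 : ‖((-Real.pi + 2 * Real.pi : ℝ) : ℂ) - ((-Real.pi : ℝ) : ℂ)‖ = 2 * Real.pi := by
      have : ((-Real.pi + 2 * Real.pi : ℝ) : ℂ) - ((-Real.pi : ℝ) : ℂ) = ((2 * Real.pi : ℝ) : ℂ) := by
        push_cast; ring
      rw [this, Complex.norm_real]
      rw [Real.norm_eq_abs, abs_of_pos (by linarith)]
    rw [e1, e2]
    field_simp
  have hsummand : Summable (fun n : ℤ => ‖fourierCoeff G n‖) := by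
    have s1 : Summable (fun n : ℤ => (if n = 0 then ‖fourierCoeff G 0‖ else 0)) := by
      apply summable_of_finite_support
      apply Set.Finite.subset (Set.finite_singleton 0)
      intro n hn
      simp only [Function.mem_support] at hn
      by_contra h
      exact hn (if_neg h)
    have s2 : Summable (fun n : ℤ => 1 / ((n:ℝ)^2)) := Real.summable_one_div_int_pow.mpr one_lt_two
    have sbound : Summable (fun n : ℤ => (if n = 0 then ‖fourierCoeff G 0‖ else 0)
        + (1/2 * (1/((n:ℝ)^2)) + 1/2 * ‖fourierCoeff G' n‖^2)) :=
      s1.add ((s2.mul_left (1/2)).add (hd2.mul_left (1/2)))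
    refine Summable.of_nonneg_of_le (fun n => norm_nonneg _) ?_ sbound
    intro n
    by_cases hn : n = 0
    · subst hn
      rw [if_pos rfl]
      have h1 : (0:ℝ) ≤ 1/2 * (1/(((0:ℤ):ℝ)^2)) + 1/2 * ‖fourierCoeff G' 0‖^2 := by positivity
      linarith
    · rw [if_neg hn, hnorm n hn, zero_add]
      have habs : (0:ℝ) < |(n : ℝ)| := by
        rw [abs_pos]
        exact_mod_cast hn
      have hsq : |(n : ℝ)| ^ 2 = (n:ℝ)^2 := sq_abs _
      have hupos : (0:ℝ) < 1 / (n:ℝ)^2 := by rw [← hsq]; positivity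
      have hu : (1 / (n:ℝ)^2) * (n:ℝ)^2 = 1 := by
        rw [← hsq]; field_simp
      have e : ‖fourierCoeff G' n‖ / |(n:ℝ)| = ‖fourierCoeff G' n‖ * |(n:ℝ)| * (1/(n:ℝ)^2) := by
        rw [← hsq]; field_simp
      rw [e]
      have h8 : (1 / (n:ℝ)^2) * |(n:ℝ)|^2 = 1 := by rw [hsq]; exact hu
      have h7 : 0 ≤ (1 / (n:ℝ)^2) * (|(n:ℝ)| * ‖fourierCoeff G' n‖ - 1)^2 :=
        mul_nonneg hupos.le (sq_nonneg _)
      have h9 : (1 / (n:ℝ)^2) * |(n:ℝ)|^2 * ‖fourierCoeff G' n‖^2 = ‖fourierCoeff G' n‖^2 := by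
        rw [h8, one_mul]
      nlinarith [h7, h9]
  have hsum : Summable (fourierCoeff (⇑Gm)) := Summable.of_norm hsummand
  have H := hasSum_fourier_series_of_summable hsum
  obtain ⟨s₀, hs₀⟩ := Metric.tendsto_atTop.mp H ε hε
  refine ⟨s₀.sup (fun i => i.natAbs), fun m hm x => ?_⟩
  have hsub : s₀ ⊆ Finset.Icc (-(m:ℤ)) m := by
    intro i hi
    have h1 : i.natAbs ≤ s₀.sup (fun i => i.natAbs) := Finset.le_sup (f := fun i => i.natAbs) hi
    have h2 : i.natAbs ≤ m := h1.trans hm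
    rw [Finset.mem_Icc]
    omega
  have hdist := hs₀ (Finset.Icc (-(m:ℤ)) m) (Finset.le_iff_subset.mpr hsub)
  have hpt : dist ((∑ i ∈ Finset.Icc (-(m:ℤ)) m, fourierCoeff (⇑Gm) i • fourier i)
        (↑x : AddCircle (2 * Real.pi))) (Gm (↑x : AddCircle (2 * Real.pi))) < ε :=
    lt_of_le_of_lt (ContinuousMap.dist_apply_le_dist _) hdist
  have hkey : (∑ i ∈ Finset.Icc (-(m:ℤ)) m, fourierCoeff (⇑Gm) i • fourier i)
        (↑x : AddCircle (2 * Real.pi))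
      = ((a 0 / 2 + ∑ k ∈ Finset.Icc 1 m, (a k * Real.cos (k * x) + b k * Real.sin (k * x)) : ℝ) : ℂ) := by
    rw [ContinuousMap.coe_sum, Finset.sum_apply]
    have hGmG : fourierCoeff (⇑Gm) = fourierCoeff G := rfl
    simp only [ContinuousMap.smul_apply, hGmG]
    rw [sum_Icc_int_eq (fun i => fourierCoeff G i • fourier i (↑x : AddCircle (2 * Real.pi))) m]
    rw [Finset.sum_congr rfl (fun k _ => hpair k x)]
    rw [hc0]
    have : fourier (0:ℤ) (↑x : AddCircle (2 * Real.pi)) = 1 := fourier_zero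
    rw [this, smul_eq_mul, mul_one]
    push_cast
    ring
  have hGx : Gm (↑x : AddCircle (2 * Real.pi)) = ((f x : ℝ) : ℂ) := circLift_coe f hf_per x
  rw [hkey, hGx, Complex.dist_eq, ← Complex.ofReal_sub, Complex.norm_real, Real.norm_eq_abs] at hpt
  exact hpt
end

section
/- (Kolmogorov–Arnold representation / DeepSets form) Let M be a positive integer and let f : [0,1]^M → ℝ be an arbitrary continuous function. Then there exist continuous functions ρ : ℝ^{2M+1} → ℝ and φ : ℝ → ℝ^{2M+1}, and real scalars λ_1, …, λ_M, such that f(x_1, …, x_M) = ρ( Σ_{m=1}^{M} λ_m φ(x_m) ) for all (x_1, …, x_M) ∈ [0,1]^M, where the inner function φ can be chosen independently of f. -/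
open Finset Polynomial

/-- Sums of distinct powers of two over `Fin M` determine the index set. -/
lemma ka_two_pow_sum_inj {M : ℕ} {A B : Finset (Fin M)}
    (h : ∑ i ∈ A, (2:ℝ)^(i:ℕ) = ∑ i ∈ B, (2:ℝ)^(i:ℕ)) : A = B := by
  have cast_eq : ∀ C : Finset (Fin M),
      ∑ i ∈ C, (2:ℝ)^(i:ℕ) = ((∑ i ∈ C.map ⟨Fin.val, Fin.val_injective⟩, 2^i : ℕ) : ℝ) := by
    intro C
    rw [Finset.sum_map]
    push_cast
    rfl
  rw [cast_eq, cast_eq] at h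
  have hnat : (∑ i ∈ A.map ⟨Fin.val, Fin.val_injective⟩, 2^i : ℕ)
      = ∑ i ∈ B.map ⟨Fin.val, Fin.val_injective⟩, 2^i := Nat.cast_injective h
  have := Finset.geomSum_injective (n := 2) le_rfl hnat
  exact Finset.map_injective _ this

/-- The weighted moment map `x ↦ (∑ m, 2^m (x m)^k)_{k=0..2M}` is injective. -/
lemma ka_moment_inj (M : ℕ) :
    Function.Injective (fun x : Fin M → ℝ =>
      fun k : Fin (2*M+1) => ∑ m : Fin M, (2:ℝ)^(m:ℕ) * (x m)^(k:ℕ)) := by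
  classical
  intro x y hxy
  set S : Finset ℝ := (Finset.image x univ) ∪ (Finset.image y univ) with hS
  have hxS : ∀ m, x m ∈ S := fun m =>
    Finset.mem_union_left _ (Finset.mem_image_of_mem x (mem_univ m))
  have hyS : ∀ m, y m ∈ S := fun m =>
    Finset.mem_union_right _ (Finset.mem_image_of_mem y (mem_univ m))
  set w : ℝ → ℝ := fun t =>
      (∑ m ∈ univ.filter (fun m => x m = t), (2:ℝ)^(m:ℕ))
      - (∑ m ∈ univ.filter (fun m => y m = t), (2:ℝ)^(m:ℕ)) with hw
  have key : ∀ z : Fin M → ℝ, (∀ m, z m ∈ S) → ∀ k : ℕ,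
      ∑ t ∈ S, (∑ m ∈ univ.filter (fun m => z m = t), (2:ℝ)^(m:ℕ)) * t^k
        = ∑ m : Fin M, (2:ℝ)^(m:ℕ) * (z m)^k := by
    intro z hz k
    rw [← Finset.sum_fiberwise_of_maps_to (fun m _ => hz m)
      (fun m => (2:ℝ)^(m:ℕ) * (z m)^k)]
    refine Finset.sum_congr rfl fun t _ => ?_
    rw [Finset.sum_mul]
    refine Finset.sum_congr rfl fun m hm => ?_
    rw [(Finset.mem_filter.1 hm).2]
  have hmom : ∀ k : ℕ, k < 2*M+1 → ∑ t ∈ S, w t * t^k = 0 := by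
    intro k hk
    have h1 := congrFun hxy (⟨k, hk⟩ : Fin (2*M+1))
    simp only at h1
    have hx := key x hxS k
    have hy := key y hyS k
    simp only [hw, sub_mul]
    rw [Finset.sum_sub_distrib, hx, hy, h1, sub_self]
  have hpoly : ∀ p : ℝ[X], p.natDegree < 2*M+1 → ∑ t ∈ S, w t * p.eval t = 0 := by
    intro p hp
    calc ∑ t ∈ S, w t * p.eval t
        = ∑ t ∈ S, ∑ k ∈ Finset.range (2*M+1), p.coeff k * (w t * t^k) := by
          refine Finset.sum_congr rfl fun t _ => ?_
          rw [Polynomial.eval_eq_sum_range' hp, Finset.mul_sum]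
          exact Finset.sum_congr rfl fun k _ => by ring
      _ = ∑ k ∈ Finset.range (2*M+1), p.coeff k * ∑ t ∈ S, w t * t^k := by
          rw [Finset.sum_comm]
          exact Finset.sum_congr rfl fun k _ => (Finset.mul_sum _ _ _).symm
      _ = 0 := Finset.sum_eq_zero fun k hk => by
          rw [hmom k (Finset.mem_range.1 hk), mul_zero]
  have hScard : S.card ≤ 2*M := by
    refine le_trans (Finset.card_union_le _ _) ?_
    have h1 : (Finset.image x univ).card ≤ M := le_trans (Finset.card_image_le)
      (by simp)
    have h2 : (Finset.image y univ).card ≤ M := le_trans (Finset.card_image_le)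
      (by simp)
    omega
  have hw0 : ∀ t ∈ S, w t = 0 := by
    intro t0 ht0
    have hinj : Set.InjOn id (S : Set ℝ) := fun a _ b _ h => h
    set p : ℝ[X] := Lagrange.basis S id t0 with hp
    have hdeg : p.natDegree < 2*M+1 := by
      rw [hp, Lagrange.natDegree_basis hinj ht0]
      omega
    have hsum := hpoly p hdeg
    rw [Finset.sum_eq_single_of_mem t0 ht0 (fun t ht hne => by
      have h0 : eval (id t) (Lagrange.basis S id t0) = 0 :=
        Lagrange.eval_basis_of_ne (Ne.symm hne) ht
      rw [hp]
      rw [show eval t (Lagrange.basis S id t0) = 0 from h0, mul_zero])] at hsum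
    have h1 : p.eval t0 = 1 := Lagrange.eval_basis_self hinj ht0
    rw [h1, mul_one] at hsum
    exact hsum
  funext m
  have ht := hw0 (x m) (hxS m)
  rw [hw, sub_eq_zero] at ht
  have hsets := ka_two_pow_sum_inj ht
  have hm : m ∈ univ.filter (fun m' => x m' = x m) := by
    simp
  rw [hsets] at hm
  exact ((Finset.mem_filter.1 hm).2).symm

/-- Kolmogorov–Arnold representation theorem (DeepSets form): there is a continuous
inner function `φ : ℝ → ℝ^{2M+1}`, independent of `f`, such that every continuous
`f : [0,1]^M → ℝ` can be written as `f(x₁,…,x_M) = ρ(Σ_m λ_m φ(x_m))` for some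
continuous outer function `ρ : ℝ^{2M+1} → ℝ` and real scalars `λ_1,…,λ_M`. -/
theorem kolmogorov_arnold_deepsets (M : ℕ) (hM : 0 < M) :
    ∃ φ : ℝ → (Fin (2 * M + 1) → ℝ), Continuous φ ∧
      ∀ f : (Fin M → ℝ) → ℝ,
        ContinuousOn f (Set.Icc (0 : Fin M → ℝ) 1) →
        ∃ ρ : (Fin (2 * M + 1) → ℝ) → ℝ, Continuous ρ ∧
          ∃ lam : Fin M → ℝ,
            ∀ x ∈ Set.Icc (0 : Fin M → ℝ) 1,
              f x = ρ (∑ m : Fin M, lam m • φ (x m)) := by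
  classical
  refine ⟨fun t k => t ^ (k:ℕ), continuous_pi fun k => continuous_pow _, ?_⟩
  intro f hf
  set K : Set (Fin M → ℝ) := Set.Icc 0 1 with hK
  have hKcomp : IsCompact K := isCompact_Icc
  set F : (Fin M → ℝ) → (Fin (2*M+1) → ℝ) :=
    fun x k => ∑ m : Fin M, (2:ℝ)^(m:ℕ) * (x m)^(k:ℕ) with hF
  have hFcont : Continuous F := continuous_pi fun k =>
    continuous_finset_sum _ fun m _ => continuous_const.mul ((continuous_apply m).pow _)
  have hFinj : Function.Injective F := ka_moment_inj M
  haveI : CompactSpace K := isCompact_iff_compactSpace.mp hKcomp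
  set Fr : K → (Fin (2*M+1) → ℝ) := fun p => F p.1 with hFr
  have hFrcont : Continuous Fr := hFcont.comp continuous_subtype_val
  have hFrinj : Function.Injective Fr := fun a b h => Subtype.ext (hFinj h)
  set e : K ≃ Set.range Fr := Equiv.ofInjective Fr hFrinj with he
  have hecont : Continuous (e : K → Set.range Fr) := by
    apply Continuous.subtype_mk hFrcont
  set h : K ≃ₜ Set.range Fr := Continuous.homeoOfEquivCompactToT2 hecont with hh
  have hclosed : IsClosed (Set.range Fr) := (isCompact_range hFrcont).isClosed
  set g : C(Set.range Fr, ℝ) :=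
    ⟨fun z => f ((h.symm z : K) : Fin M → ℝ),
      (show Continuous (fun z => f ((h.symm z : K) : Fin M → ℝ)) from
        (hf.restrict).comp h.symm.continuous)⟩ with hg
  obtain ⟨ρ, hρ⟩ := g.exists_restrict_eq hclosed
  refine ⟨ρ, ρ.continuous, fun m => (2:ℝ)^(m:ℕ), ?_⟩
  intro x hx
  have hsum : (∑ m : Fin M, (2:ℝ)^(m:ℕ) • (fun k : Fin (2*M+1) => (x m)^(k:ℕ))) = F x := by
    funext k
    simp [hF, Finset.sum_apply]
  rw [hsum]
  have hmem : F x ∈ Set.range Fr := ⟨⟨x, hx⟩, rfl⟩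
  have h1 : ρ (F x) = g ⟨F x, hmem⟩ := by
    have := congrFun (congrArg (fun q : C(Set.range Fr, ℝ) => (q : Set.range Fr → ℝ)) hρ)
      ⟨F x, hmem⟩
    simpa using this
  have h2 : (⟨F x, hmem⟩ : Set.range Fr) = e ⟨x, hx⟩ := by
    apply Subtype.ext
    rfl
  rw [h1, hg, h2]
  simp only [ContinuousMap.coe_mk]
  have h3 : h.symm (e ⟨x, hx⟩) = ⟨x, hx⟩ := by
    have : h (⟨x, hx⟩ : K) = e ⟨x, hx⟩ := rfl
    rw [← this, Homeomorph.symm_apply_apply]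
  rw [h3]
end

section
/- (Universal approximation by ReLU networks) Let n be a positive integer, K ⊆ ℝ^n a compact set, f : ℝ^n → ℝ a continuous function, and ε > 0. Then there exist a positive integer N, vectors w_1, …, w_N ∈ ℝ^n, and scalars a_1, …, a_N, b_1, …, b_N, c ∈ ℝ such that sup_{x ∈ K} | f(x) − ( c + Σ_{i=1}^{N} a_i · max(0, ⟨w_i, x⟩ + b_i) ) | < ε; i.e., one-hidden-layer ReLU networks are uniformly dense in the continuous functions on any compact subset of ℝ^n. -/
open Finset

/-- 1-D ReLU approximation: any continuous function on a compact interval is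
uniformly approximable by a one-hidden-layer ReLU network (with unit input weights). -/
lemma relu1d (g : ℝ → ℝ) (hg : Continuous g) (A B ε : ℝ) (hε : 0 < ε) :
    ∃ (N : ℕ) (a b : Fin N → ℝ) (c : ℝ),
      ∀ t ∈ Set.Icc A B, |g t - (c + ∑ i, a i * max 0 (t + b i))| < ε := by
  rcases le_or_gt B A with hBA | hAB
  · refine ⟨0, Fin.elim0, Fin.elim0, g A, fun t ht => ?_⟩
    have : t = A := le_antisymm (ht.2.trans hBA) ht.1
    simp [this, hε]
  · have hu : UniformContinuousOn g (Set.Icc A B) :=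
      isCompact_Icc.uniformContinuousOn_of_continuous hg.continuousOn
    obtain ⟨δ, hδ, hδ'⟩ := Metric.uniformContinuousOn_iff.mp hu (ε / 3) (by positivity)
    obtain ⟨m, hm⟩ := exists_nat_gt ((B - A) / δ)
    have hm0 : (0 : ℝ) < (m : ℝ) := lt_trans (div_pos (by linarith) hδ) hm
    have hm1 : 1 ≤ m := by exact_mod_cast Nat.one_le_iff_ne_zero.mpr (by
      intro h; rw [h] at hm0; simp at hm0)
    set h : ℝ := (B - A) / m with hh_def
    have hh : 0 < h := div_pos (by linarith) hm0
    have hhδ : h < δ := by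
      rw [hh_def, div_lt_iff₀ hm0]
      calc B - A = ((B - A) / δ) * δ := by field_simp
        _ < m * δ := by gcongr
        _ = δ * m := by ring
    set T : ℕ → ℝ := fun k => A + k * h with hT_def
    have hTmono : ∀ {p q : ℕ}, p ≤ q → T p ≤ T q := by
      intro p q hpq
      have : (p : ℝ) ≤ q := by exact_mod_cast hpq
      simp only [hT_def]
      nlinarith
    have hTm : T m = B := by
      simp only [hT_def, hh_def]; field_simp; ring
    set σ : ℕ → ℝ := fun k => (g (T (k + 1)) - g (T k)) / h with hσ_def
    set d : ℕ → ℝ := fun k => match k with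
      | 0 => σ 0
      | (k + 1) => σ (k + 1) - σ k with hd_def
    have hstep : ∀ k : ℕ, T (k + 1) - T k = h := by
      intro k; simp only [hT_def]; push_cast; ring
    have hσh : ∀ k : ℕ, σ k * h = g (T (k + 1)) - g (T k) := by
      intro k; rw [hσ_def]; field_simp
    have key : ∀ j : ℕ, ∀ t : ℝ,
        g (T 0) + ∑ k ∈ range (j + 1), d k * (t - T k) = g (T j) + σ j * (t - T j) := by
      intro j
      induction j with
      | zero => intro t; simp [hd_def]
      | succ j ih =>
        intro t
        rw [Finset.sum_range_succ, ← add_assoc, ih t]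
        have e1 := hσh j
        have e2 := hstep j
        have : d (j + 1) = σ (j + 1) - σ j := rfl
        rw [this]
        linear_combination e1 + σ j * e2
    refine ⟨m, fun i => d i, fun i => -(T i), g A, fun t ht => ?_⟩
    -- locate the segment containing t
    set j : ℕ := min (m - 1) ⌊(t - A) / h⌋₊ with hj_def
    have hjm : j < m := lt_of_le_of_lt (min_le_left _ _) (by omega)
    have hj1m : j + 1 ≤ m := hjm
    have hTjt : T j ≤ t := by
      have h1 : (j : ℝ) ≤ (⌊(t - A) / h⌋₊ : ℝ) := by
        exact_mod_cast min_le_right (m - 1) ⌊(t - A) / h⌋₊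
      have h2 : (⌊(t - A) / h⌋₊ : ℝ) ≤ (t - A) / h :=
        Nat.floor_le (div_nonneg (by linarith [ht.1]) hh.le)
      have h3 : (j : ℝ) * h ≤ t - A := (le_div_iff₀ hh).mp (h1.trans h2)
      simp only [hT_def]; linarith
    have hTj1t : t ≤ T (j + 1) := by
      rcases le_or_gt ⌊(t - A) / h⌋₊ (m - 1) with hc | hc
      · have hj_eq : j = ⌊(t - A) / h⌋₊ := min_eq_right hc
        have := Nat.lt_floor_add_one ((t - A) / h)
        have h3 : (t - A) / h < (j : ℝ) + 1 := by rw [hj_eq]; exact_mod_cast this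
        have : t - A < ((j : ℝ) + 1) * h := by
          rw [div_lt_iff₀ hh] at h3; linarith
        simp only [hT_def]; push_cast; linarith
      · have hj_eq : j = m - 1 := min_eq_left hc.le
        have : j + 1 = m := by omega
        rw [this, hTm]; exact ht.2
    -- the network equals the linear interpolant on this segment
    have hsum : (∑ i : Fin m, d i * max 0 (t + -(T i)))
        = ∑ k ∈ range (j + 1), d k * (t - T k) := by
      rw [Fin.sum_univ_eq_sum_range (fun k => d k * max 0 (t + -(T k))) m]
      rw [← Finset.sum_subset (Finset.range_subset_range.mpr hj1m)]
      · refine Finset.sum_congr rfl fun k hk => ?_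
        have hk' : k ≤ j := by simpa [Nat.lt_succ_iff] using Finset.mem_range.mp hk
        have : T k ≤ t := (hTmono hk').trans hTjt
        rw [max_eq_right (by linarith)]
        ring_nf
      · intro k hk hk'
        have hk2 : j + 1 ≤ k := by
          have := Finset.mem_range.not.mp hk'
          omega
        have : t ≤ T k := hTj1t.trans (hTmono hk2)
        rw [max_eq_left (by linarith)]
        ring
    have hT0 : T 0 = A := by simp [hT_def]
    have hfinal : g A + ∑ i : Fin m, d i * max 0 (t + -(T i))
        = g (T j) + σ j * (t - T j) := by
      rw [hsum, ← hT0, key j t]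
    -- error estimate
    have hjh : (0:ℝ) ≤ (j:ℝ) * h := mul_nonneg (Nat.cast_nonneg j) hh.le
    have hTjIcc : T j ∈ Set.Icc A B := ⟨by simp only [hT_def]; linarith, hTjt.trans ht.2⟩
    have hTj1Icc : T (j + 1) ∈ Set.Icc A B := by
      constructor
      · have : (0:ℝ) ≤ ((j:ℝ)+1) * h := by positivity
        simp only [hT_def]; push_cast; linarith
      · rw [← hTm]; exact hTmono hj1m
    have hd1 : |g t - g (T j)| < ε / 3 := by
      have := hδ' t ht (T j) hTjIcc (by
        rw [Real.dist_eq]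
        have h1 : t - T j ≤ h := by have := hstep j; linarith
        rw [abs_of_nonneg (by linarith)]
        linarith)
      rwa [Real.dist_eq] at this
    have hd2 : |g (T (j + 1)) - g (T j)| < ε / 3 := by
      have := hδ' (T (j + 1)) hTj1Icc (T j) hTjIcc (by
        rw [Real.dist_eq]
        have := hstep j
        rw [abs_of_nonneg (by linarith)]
        linarith)
      rwa [Real.dist_eq] at this
    have hd3 : |σ j * (t - T j)| ≤ |g (T (j + 1)) - g (T j)| := by
      have h1 : t - T j ≤ h := by have := hstep j; linarith
      have h2 : 0 ≤ t - T j := by linarith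
      calc |σ j * (t - T j)| = |g (T (j + 1)) - g (T j)| / h * |t - T j| := by
            rw [hσ_def, abs_mul, abs_div, abs_of_pos hh]
        _ ≤ |g (T (j + 1)) - g (T j)| / h * h := by
            gcongr
            rwa [abs_of_nonneg h2]
        _ = |g (T (j + 1)) - g (T j)| := by field_simp
    have goal_eq : g t - (g A + ∑ i : Fin m, d i * max 0 (t + -(T i)))
        = (g t - g (T j)) - σ j * (t - T j) := by rw [hfinal]; ring
    simp only [goal_eq]
    obtain ⟨ha1, ha2⟩ := abs_lt.mp hd1
    obtain ⟨hb1, hb2⟩ := abs_le.mp (hd3.trans hd2.le)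
    clear_value T σ d j
    rw [abs_lt]
    constructor
    · linarith
    · linarith

section Networks

variable (n : ℕ) (K : Set (Fin n → ℝ))

/-- A function represented exactly by a one-hidden-layer ReLU network. -/
def IsNet (g : (Fin n → ℝ) → ℝ) : Prop :=
  ∃ (N : ℕ) (w : Fin N → Fin n → ℝ) (a b : Fin N → ℝ) (c : ℝ),
    g = fun x => c + ∑ i, a i * max 0 ((∑ j, w i j * x j) + b i)

variable {n}

lemma isNet_const (c : ℝ) : IsNet n (fun _ => c) :=
  ⟨0, Fin.elim0, Fin.elim0, Fin.elim0, c, by funext x; simp⟩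

lemma isNet_add {g g' : (Fin n → ℝ) → ℝ} (h : IsNet n g) (h' : IsNet n g') :
    IsNet n (fun x => g x + g' x) := by
  obtain ⟨N, w, a, b, c, rfl⟩ := h
  obtain ⟨N', w', a', b', c', rfl⟩ := h'
  refine ⟨N + N', Fin.append w w', Fin.append a a', Fin.append b b', c + c', ?_⟩
  funext x
  simp only [Fin.sum_univ_add, Fin.append_left, Fin.append_right]
  ring

lemma isNet_smul (r : ℝ) {g : (Fin n → ℝ) → ℝ} (h : IsNet n g) :
    IsNet n (fun x => r * g x) := by
  obtain ⟨N, w, a, b, c, rfl⟩ := h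
  refine ⟨N, w, fun i => r * a i, b, r * c, ?_⟩
  funext x
  rw [mul_add, Finset.mul_sum]
  congr 1
  refine Finset.sum_congr rfl fun i _ => ?_
  ring

variable (n) in
/-- Uniform approximability on `K` by one-hidden-layer ReLU networks. -/
def NetApprox (g : (Fin n → ℝ) → ℝ) : Prop :=
  ∀ ε > 0, ∃ h, IsNet n h ∧ ∀ x ∈ K, |g x - h x| < ε

variable {K}

lemma netApprox_const (c : ℝ) : NetApprox n K (fun _ => c) :=
  fun ε hε => ⟨fun _ => c, isNet_const c, fun x _ => by simpa using hε⟩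

lemma netApprox_add {g g' : (Fin n → ℝ) → ℝ} (h : NetApprox n K g) (h' : NetApprox n K g') :
    NetApprox n K (fun x => g x + g' x) := by
  intro ε hε
  obtain ⟨u, hu, hu'⟩ := h (ε / 2) (by positivity)
  obtain ⟨v, hv, hv'⟩ := h' (ε / 2) (by positivity)
  refine ⟨fun x => u x + v x, isNet_add hu hv, fun x hx => ?_⟩
  have h1 := hu' x hx
  have h2 := hv' x hx
  calc |g x + g' x - (u x + v x)| = |(g x - u x) + (g' x - v x)| := by ring_nf
    _ ≤ |g x - u x| + |g' x - v x| := abs_add_le _ _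
    _ < ε / 2 + ε / 2 := by gcongr
    _ = ε := by ring

lemma netApprox_smul (r : ℝ) {g : (Fin n → ℝ) → ℝ} (h : NetApprox n K g) :
    NetApprox n K (fun x => r * g x) := by
  intro ε hε
  obtain ⟨u, hu, hu'⟩ := h (ε / (|r| + 1)) (by positivity)
  refine ⟨fun x => r * u x, isNet_smul r hu, fun x hx => ?_⟩
  have h1 := hu' x hx
  have hr : |r| < |r| + 1 := by linarith
  calc |r * g x - r * u x| = |r| * |g x - u x| := by rw [← abs_mul]; ring_nf
    _ ≤ |r| * (ε / (|r| + 1)) := by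
        gcongr
    _ < (|r| + 1) * (ε / (|r| + 1)) := by
        have : 0 < ε / (|r| + 1) := by positivity
        gcongr
    _ = ε := by field_simp

lemma netApprox_sum {ι : Type*} (s : Finset ι) (g : ι → (Fin n → ℝ) → ℝ)
    (h : ∀ i ∈ s, NetApprox n K (g i)) :
    NetApprox n K (fun x => ∑ i ∈ s, g i x) := by
  classical
  induction s using Finset.induction_on with
  | empty => simpa using netApprox_const (K := K) 0
  | @insert a s hi ih =>
    simp only [Finset.sum_insert hi]
    exact netApprox_add (h a (Finset.mem_insert_self a s))
      (ih fun i hi' => h i (Finset.mem_insert_of_mem hi'))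

lemma netApprox_ridge (hK : IsCompact K) (u : ℝ → ℝ) (hu : Continuous u) (w : Fin n → ℝ) :
    NetApprox n K (fun x => u (∑ j, w j * x j)) := by
  intro ε hε
  have hc : Continuous (fun x : Fin n → ℝ => ∑ j, w j * x j) := by
    exact continuous_finset_sum _ fun j _ => (continuous_const.mul (continuous_apply j))
  obtain ⟨C, hC⟩ := hK.exists_bound_of_continuousOn hc.continuousOn
  obtain ⟨N, a, b, c, hnet⟩ := relu1d u hu (-C) C ε hε
  refine ⟨fun x => c + ∑ i, a i * max 0 ((∑ j, w j * x j) + b i),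
    ⟨N, fun _ => w, a, b, c, rfl⟩, fun x hx => ?_⟩
  have hmem : (∑ j, w j * x j) ∈ Set.Icc (-C) C := by
    have := hC x hx
    rw [Real.norm_eq_abs] at this
    exact ⟨neg_le_of_abs_le this, le_of_abs_le this⟩
  exact hnet _ hmem

end Networks

/-- Universal approximation by one-hidden-layer ReLU networks: for any compact
`K ⊆ ℝ^n`, continuous `f : ℝ^n → ℝ` and `ε > 0`, there is a network
`x ↦ c + Σ_{i=1}^N a_i · max(0, ⟨w_i, x⟩ + b_i)` uniformly `ε`-close to `f` on `K`. -/
theorem relu_network_universal_approximation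
    (n : ℕ) (hn : 0 < n) (K : Set (Fin n → ℝ)) (hK : IsCompact K)
    (f : (Fin n → ℝ) → ℝ) (hf : Continuous f) (ε : ℝ) (hε : 0 < ε) :
    ∃ (N : ℕ) (_ : 0 < N) (w : Fin N → (Fin n → ℝ)) (a b : Fin N → ℝ) (c : ℝ),
      ∀ x ∈ K,
        |f x - (c + ∑ i : Fin N, a i * max 0 ((∑ j : Fin n, w i j * x j) + b i))| < ε := by
  classical
  haveI : CompactSpace K := isCompact_iff_compactSpace.mp hK
  -- the exponential ridge functions, as continuous maps on K
  set E : (Fin n → ℝ) → C(K, ℝ) := fun w =>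
    ⟨fun x => Real.exp (∑ j, w j * (x : Fin n → ℝ) j), by
      apply Real.continuous_exp.comp
      exact continuous_finset_sum _ fun j _ =>
        continuous_const.mul ((continuous_apply j).comp continuous_subtype_val)⟩ with hE_def
  have hEmul : ∀ w v, E w * E v = E (w + v) := by
    intro w v
    ext x
    simp only [hE_def, ContinuousMap.mul_apply, ContinuousMap.coe_mk]
    rw [← Real.exp_add]
    congr 1
    rw [← Finset.sum_add_distrib]
    refine Finset.sum_congr rfl fun j _ => ?_
    simp [add_mul]
  set M : Submodule ℝ C(K, ℝ) := Submodule.span ℝ (Set.range E) with hM_def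
  have hone : (1 : C(K, ℝ)) ∈ M := by
    apply Submodule.subset_span
    refine ⟨0, ?_⟩
    ext x
    simp [hE_def]
  have hmul : ∀ u v : C(K, ℝ), u ∈ M → v ∈ M → u * v ∈ M := by
    intro u v hu hv
    induction hu using Submodule.span_induction with
    | mem w hw =>
      obtain ⟨w, rfl⟩ := hw
      induction hv using Submodule.span_induction with
      | mem v' hv' =>
        obtain ⟨v', rfl⟩ := hv'
        rw [hEmul]
        exact Submodule.subset_span ⟨w + v', rfl⟩
      | zero => rw [mul_zero]; exact M.zero_mem
      | add a b _ _ ha hb => rw [mul_add]; exact M.add_mem ha hb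
      | smul r a _ ha => rw [mul_smul_comm]; exact M.smul_mem r ha
    | zero => rw [zero_mul]; exact M.zero_mem
    | add a b _ _ ha hb => rw [add_mul]; exact M.add_mem ha hb
    | smul r a _ ha => rw [smul_mul_assoc]; exact M.smul_mem r ha
  set A : Subalgebra ℝ C(K, ℝ) := M.toSubalgebra hone hmul with hA_def
  have hsep : A.SeparatesPoints := by
    intro x y hxy
    have hxy' : (x : Fin n → ℝ) ≠ (y : Fin n → ℝ) := fun h => hxy (Subtype.coe_injective h)
    obtain ⟨j, hj⟩ := Function.ne_iff.mp hxy'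
    refine ⟨E (Pi.single j 1), ⟨E (Pi.single j 1),
      Submodule.subset_span ⟨Pi.single j 1, rfl⟩, rfl⟩, ?_⟩
    have hev : ∀ z : K, E (Pi.single j 1) z = Real.exp ((z : Fin n → ℝ) j) := by
      intro z
      simp only [hE_def, ContinuousMap.coe_mk]
      congr 1
      rw [Finset.sum_eq_single j]
      · simp
      · intro b _ hb; simp [Pi.single_apply, hb]
      · simp
    rw [hev, hev]
    exact fun h => hj (Real.exp_injective h)
  obtain ⟨⟨g, hgA⟩, hgf⟩ :=
    ContinuousMap.exists_mem_subalgebra_near_continuous_of_separatesPoints A hsep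
      (fun x : K => f x) (hf.comp continuous_subtype_val) (ε / 2) (by positivity)
  have hgM : g ∈ M := hgA
  rw [hM_def, Finsupp.mem_span_range_iff_exists_finsupp] at hgM
  obtain ⟨cf, hcf⟩ := hgM
  -- the ambient-space version of g
  set G : (Fin n → ℝ) → ℝ :=
    fun x => ∑ w ∈ cf.support, cf w * Real.exp (∑ j, w j * x j) with hG_def
  have hGg : ∀ x : K, G x = g x := by
    intro x
    rw [← hcf]
    simp only [hG_def, Finsupp.sum, ContinuousMap.coe_sum, Finset.sum_apply,
      ContinuousMap.coe_smul, Pi.smul_apply, smul_eq_mul]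
    refine Finset.sum_congr rfl fun w _ => ?_
    simp [hE_def]
  have hGapprox : NetApprox n K G := by
    rw [hG_def]
    exact netApprox_sum _ _ fun w _ =>
      netApprox_smul (cf w) (netApprox_ridge hK Real.exp Real.continuous_exp w)
  obtain ⟨h, ⟨N, w, a, b, c, rfl⟩, hGh⟩ := hGapprox (ε / 2) (by positivity)
  -- pad to ensure N > 0
  refine ⟨N + 1, Nat.succ_pos N, Fin.snoc w 0, Fin.snoc a 0, Fin.snoc b 0, c, fun x hx => ?_⟩
  have hpad : (∑ i : Fin (N + 1), (Fin.snoc a 0 : Fin (N+1) → ℝ) i *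
      max 0 ((∑ j, (Fin.snoc w 0 : Fin (N+1) → Fin n → ℝ) i j * x j) +
        (Fin.snoc b 0 : Fin (N+1) → ℝ) i))
      = ∑ i : Fin N, a i * max 0 ((∑ j, w i j * x j) + b i) := by
    rw [Fin.sum_univ_castSucc]
    simp [Fin.snoc_castSucc]
  rw [hpad]
  have h1 := hgf ⟨x, hx⟩
  rw [Real.norm_eq_abs] at h1
  have h1' : |(g ⟨x, hx⟩ : ℝ) - f x| < ε / 2 := h1
  have h2 := hGh x hx
  have h3' : G x = g ⟨x, hx⟩ := hGg ⟨x, hx⟩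
  obtain ⟨ha1, ha2⟩ := abs_lt.mp h1'
  obtain ⟨hb1, hb2⟩ := abs_lt.mp h2
  rw [abs_lt]
  constructor <;> linarith [h3']
end
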